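/- Let G be a connected graph with minimum degree 1 and girth at least 15 in which all maximal open packings have the same cardinality. Then no two single star support vertices of G are at distance exactly 3, and no two single star support vertices are at distance exactly 4. -/

import Mathlib

/-!
Open packings of `G` are the independent sets of its open neighbourhood graph `ong G`, so `ong G`
is well-covered, and an open packing `S` whose closed `ong G`-neighbourhood lies inside that of an
open packing `T` satisfies `|S| ≤ |T|`.

If single star supports `s₁`, `s₂` with leaves `l₁`, `l₂` are at distance 3 or 4, compare
`S = {l₁, s₁, l₂, s₂}` with a three-element packing `T` beside a shortest `s₁`-`s₂` path. What
`S` dominates and `T` does not are vertices `t` sharing a neighbour with a single star support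
`s`. Such a `t` is no leaf (as `s` is single star) and has a neighbour `y` that is no leaf (two
support vertices with a common neighbour are adjacent), so `t` has a grandchild. Girth `≥ 15`
makes the levels `G.dist ρ ·` from a vertex `ρ` next to the path behave like depths in a tree up
to depth `7`: the chosen grandchildren lie at level `6`, form an open packing, and conflict with
nothing in `S ∪ T`. Adding them to both `S` and `T` contradicts `|S| ≤ |T|`.
-/

open SimpleGraph

/-- The open neighborhood graph of `G`: distinct vertices are adjacent iff they have a
common neighbor in `G`. -/
def ong {V : Type*} (G : SimpleGraph V) : SimpleGraph V where
  Adj u v := u ≠ v ∧ ∃ w, G.Adj u w ∧ G.Adj v w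
  symm := ⟨by rintro u v ⟨h, w, h1, h2⟩; exact ⟨h.symm, w, h2, h1⟩⟩
  loopless := ⟨by rintro u ⟨h, -⟩; exact h rfl⟩

/-- A set of vertices is an open packing if no two distinct members have a common neighbor. -/
def IsOpenPacking {V : Type*} (G : SimpleGraph V) (P : Set V) : Prop :=
  ∀ ⦃u⦄, u ∈ P → ∀ ⦃v⦄, v ∈ P → u ≠ v → ∀ w, ¬(G.Adj u w ∧ G.Adj v w)

/-- An independent set of vertices. -/
def IsIndep {V : Type*} (G : SimpleGraph V) (s : Set V) : Prop :=
  s.Pairwise fun u v => ¬ G.Adj u v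

/-- All maximal open packings of `G` have the same cardinality. -/
def InU {V : Type*} (G : SimpleGraph V) : Prop :=
  ∀ P Q : Set V, Maximal (IsOpenPacking G) P → Maximal (IsOpenPacking G) Q →
    P.ncard = Q.ncard

/-- All maximal independent sets of `G` have the same cardinality. -/
def WellCovered {V : Type*} (G : SimpleGraph V) : Prop :=
  ∀ P Q : Set V, Maximal (IsIndep G) P → Maximal (IsIndep G) Q → P.ncard = Q.ncard

/-- A leaf is a vertex with exactly one neighbor. -/
def IsLeaf {V : Type*} (G : SimpleGraph V) (v : V) : Prop :=
  ∃ u, G.neighborSet v = {u}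

/-- A support vertex is one adjacent to a leaf. -/
def IsSupport {V : Type*} (G : SimpleGraph V) (s : V) : Prop :=
  ∃ l, G.neighborSet l = {s}

/-- A single star support vertex: a support vertex adjacent to no other support vertex. -/
def IsSingleStarSupport {V : Type*} (G : SimpleGraph V) (s : V) : Prop :=
  IsSupport G s ∧ ∀ t, G.Adj s t → ¬ IsSupport G t

section
variable {V : Type*}

def closedNeighborSet (H : SimpleGraph V) (S : Set V) : Set V :=
  {v | ∃ s ∈ S, v = s ∨ H.Adj v s}

lemma subset_closedNeighborSet (H : SimpleGraph V) (S : Set V) : S ⊆ closedNeighborSet H S :=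
  fun s hs => ⟨s, hs, Or.inl rfl⟩

lemma closedNeighborSet_mono (H : SimpleGraph V) {S T : Set V} (h : S ⊆ T) :
    closedNeighborSet H S ⊆ closedNeighborSet H T :=
  fun _ ⟨s, hs, hv⟩ => ⟨s, h hs, hv⟩

lemma IsIndep.union {H : SimpleGraph V} {S T : Set V} (hS : IsIndep H S) (hT : IsIndep H T)
    (hST : ∀ s ∈ S, ∀ t ∈ T, ¬ H.Adj s t) : IsIndep H (S ∪ T) :=
  Set.pairwise_union.mpr ⟨hS, hT, fun s hs t ht _ => ⟨hST s hs t ht, fun h => hST s hs t ht h.symm⟩⟩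

lemma isIndep_insert {H : SimpleGraph V} {a : V} {s : Set V} :
    IsIndep H (insert a s) ↔ IsIndep H s ∧ ∀ b ∈ s, ¬ H.Adj a b := by
  unfold IsIndep
  rw [Set.pairwise_insert]
  refine and_congr_right fun _ => forall₂_congr fun b _ => ?_
  by_cases hab : a = b
  · subst hab; simp
  · exact ⟨fun h => (h hab).1, fun h _ => ⟨h, fun h' => h h'.symm⟩⟩

lemma isIndep_singleton (H : SimpleGraph V) (a : V) : IsIndep H {a} :=
  Set.pairwise_singleton _ _

/-- Extend `T` to a maximal independent set `M`: replacing `T` by `S` inside `M` keeps it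
independent, and `M` cannot grow. -/
theorem WellCovered.ncard_le_of_closedNeighborSet_subset [Finite V] {H : SimpleGraph V}
    (hH : WellCovered H) {S T : Set V} (hS : IsIndep H S) (hT : IsIndep H T)
    (hST : closedNeighborSet H S ⊆ closedNeighborSet H T) : S.ncard ≤ T.ncard := by
  obtain ⟨M, hTM, hM⟩ := Finite.exists_le_maximal hT
  have hfar : ∀ r ∈ M \ T, r ∉ closedNeighborSet H S := by
    rintro r ⟨hrM, hrT⟩ hr
    obtain ⟨t, ht, rfl | hadj⟩ := hST hr
    · exact hrT ht
    · exact hM.prop hrM (hTM ht) (fun h => hrT (h ▸ ht)) hadj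
  have hdisj : Disjoint S (M \ T) :=
    Set.disjoint_left.mpr fun s hs hsR => hfar s hsR (subset_closedNeighborSet H S hs)
  have hSR : IsIndep H (S ∪ M \ T) :=
    hS.union (hM.prop.mono Set.sdiff_subset) fun s hs r hr hadj =>
      hfar r hr ⟨s, hs, Or.inr hadj.symm⟩
  obtain ⟨M', hSM', hM'⟩ := Finite.exists_le_maximal hSR
  have h₁ := Set.ncard_le_ncard hSM'
  rw [Set.ncard_union_eq hdisj, hH M' M hM' hM] at h₁
  have h₂ := Set.ncard_sdiff_add_ncard_of_subset hTM
  omega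

lemma isOpenPacking_eq_isIndep_ong (G : SimpleGraph V) : IsOpenPacking G = IsIndep (ong G) := by
  ext P
  simp only [IsOpenPacking, IsIndep, Set.Pairwise, ong, not_and, not_exists]
  grind

lemma InU.wellCovered_ong {G : SimpleGraph V} (hU : InU G) : WellCovered (ong G) := by
  rwa [InU, isOpenPacking_eq_isIndep_ong] at hU

variable {G : SimpleGraph V}

lemma adj_of_neighborSet_eq_singleton {l s : V} (hl : G.neighborSet l = {s}) : G.Adj l s :=
  show s ∈ G.neighborSet l from hl ▸ rfl

lemma eq_of_neighborSet_eq_singleton {l s v : V} (hl : G.neighborSet l = {s}) (h : G.Adj l v) :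
    v = s :=
  show v ∈ ({s} : Set V) from hl ▸ h

lemma adj_of_mem_closedNeighborSet_ong_leaf {l s v : V} (hl : G.neighborSet l = {s})
    (hv : v ∈ closedNeighborSet (ong G) {l}) : G.Adj v s := by
  obtain ⟨_, rfl, rfl | ⟨-, z, hvz, hlz⟩⟩ := hv
  · exact adj_of_neighborSet_eq_singleton hl
  · rwa [← eq_of_neighborSet_eq_singleton hl hlz]

lemma mem_closedNeighborSet_ong_of_adj {S : Set V} {v x z : V} (hv : G.Adj v z) (hx : G.Adj x z)
    (hxS : x ∈ S) : v ∈ closedNeighborSet (ong G) S := by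
  by_cases h : v = x
  · exact ⟨x, hxS, Or.inl h⟩
  · exact ⟨x, hxS, Or.inr ⟨h, z, hv, hx⟩⟩

lemma dist_le_dist_add_one_of_adj {r u v : V} (h : G.Adj u v) : G.dist r v ≤ G.dist r u + 1 := by
  simpa [dist_eq_one_iff_adj.mpr h] using h.reachable.dist_triangle_right r

lemma dist_le_dist_add_two_of_ong_adj {r u v : V} (h : (ong G).Adj u v) :
    G.dist r v ≤ G.dist r u + 2 := by
  obtain ⟨-, z, huz, hvz⟩ := h
  have := dist_le_dist_add_one_of_adj (r := r) huz
  have := dist_le_dist_add_one_of_adj (r := r) hvz.symm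
  omega

lemma egirth_le_of_adj_of_walks {r u v : V} (h : G.Adj u v) (p : G.Walk r u) (q : G.Walk r v)
    (hv : v ∉ p.support) (hu : u ∉ q.support) :
    G.egirth ≤ (p.length + q.length + 1 : ℕ) := by
  classical
  set c : G.Walk v v := .cons h.symm (p.reverse.append q).bypass
  have hc : c.IsCycle := by
    refine (Walk.cons_isCycle_iff _ _).mpr ⟨Walk.bypass_isPath _, fun he => ?_⟩
    have he := Walk.edges_bypass_subset_edges _ he
    rw [Walk.edges_append, Walk.edges_reverse, List.mem_append, List.mem_reverse] at he
    rcases he with he | he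
    · exact hv (p.fst_mem_support_of_mem_edges he)
    · exact hu (q.snd_mem_support_of_mem_edges he)
  calc G.egirth ≤ c.length := egirth_le_length hc
    _ ≤ (p.length + q.length + 1 : ℕ) := by
      have := (p.reverse.append q).length_bypass_le_length
      simp only [c, Walk.length_cons, Walk.length_append, Walk.length_reverse] at this ⊢
      exact_mod_cast Nat.add_le_add_right this 1

lemma dist_lt_of_mem_support {r x y : V} (p : G.Walk r x) (hp : p.length = G.dist r x)
    (hy : y ∈ p.support) (hyx : y ≠ x) : G.dist r y < G.dist r x := by
  classical
  have hsplit := congrArg Walk.length (p.take_spec hy)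
  have hdrop : (p.dropUntil y hy).length ≠ 0 := fun h => hyx (Walk.eq_of_length_eq_zero h)
  have := dist_le (p.takeUntil y hy)
  rw [Walk.length_append] at hsplit
  omega

section Levels

variable (hc : G.Connected) {r : V}
include hc

lemma dist_ne_of_adj {u v : V} (hg : ((2 * G.dist r u + 1 : ℕ) : ℕ∞) < G.egirth)
    (h : G.Adj u v) : G.dist r u ≠ G.dist r v := by
  intro hd
  obtain ⟨p, hp⟩ := hc.exists_walk_length_eq_dist r u
  obtain ⟨q, hq⟩ := hc.exists_walk_length_eq_dist r v
  have hv : v ∉ p.support := fun hv => (dist_lt_of_mem_support p hp hv h.ne').ne' hd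
  have hu : u ∉ q.support := fun hu => (dist_lt_of_mem_support q hq hu h.ne).ne hd
  have := egirth_le_of_adj_of_walks h p q hv hu
  rw [hp, hq, ← hd, ← two_mul] at this
  exact this.not_gt hg

lemma eq_of_adj_of_adj {u u' v : V} (hg : ((2 * G.dist r v : ℕ) : ℕ∞) < G.egirth)
    (hu : G.Adj u v) (hu' : G.Adj u' v) (hd : G.dist r u + 1 = G.dist r v)
    (hd' : G.dist r u' + 1 = G.dist r v) : u = u' := by
  by_contra hne
  obtain ⟨p, hp⟩ := hc.exists_walk_length_eq_dist r u
  obtain ⟨q, hq⟩ := hc.exists_walk_length_eq_dist r u'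
  have hv : v ∉ p.support := fun hv => by
    have := dist_lt_of_mem_support p hp hv hu.ne'
    omega
  have hnu : u ∉ (q.concat hu').support := by
    rw [Walk.support_concat, List.mem_append, List.mem_singleton]
    rintro (h | rfl)
    · have := dist_lt_of_mem_support q hq h hne
      omega
    · exact hu.ne rfl
  have := egirth_le_of_adj_of_walks hu p (q.concat hu') hv hnu
  rw [Walk.length_concat, hp, hq, hd', add_right_comm, hd, ← two_mul] at this
  exact this.not_gt hg

lemma dist_eq_add_one_of_adj_of_ne {p x c : V}
    (hg : ((2 * G.dist r x + 1 : ℕ) : ℕ∞) < G.egirth) (hpx : G.Adj p x)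
    (hd : G.dist r p + 1 = G.dist r x) (hxc : G.Adj x c) (hcp : c ≠ p) :
    G.dist r c = G.dist r x + 1 := by
  have hne := dist_ne_of_adj hc hg hxc
  rcases hxc.diff_dist_adj (u := r) with h | h | h
  · exact absurd h.symm hne
  · exact h
  · refine absurd (eq_of_adj_of_adj hc (hg.trans_le' ?_) hxc.symm hpx (by omega) hd) hcp
    exact_mod_cast (by omega : 2 * G.dist r x ≤ 2 * G.dist r x + 1)

lemma exists_common_parent {u v : V} (hg : ((2 * G.dist r u + 2 : ℕ) : ℕ∞) < G.egirth)
    (h : (ong G).Adj u v) (hd : G.dist r u = G.dist r v) :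
    ∃ z, G.Adj u z ∧ G.Adj v z ∧ G.dist r z + 1 = G.dist r u := by
  obtain ⟨huv, z, huz, hvz⟩ := h
  have hne := dist_ne_of_adj hc (r := r) (hg.trans_le' (by exact_mod_cast (by omega))) huz
  refine ⟨z, huz, hvz, ?_⟩
  rcases huz.diff_dist_adj (u := r) with h | h | h
  · exact absurd h.symm hne
  · exact absurd (eq_of_adj_of_adj hc (by rwa [h, mul_add]) huz hvz h.symm (hd ▸ h.symm)) huv
  · omega

end Levels

lemma not_ong_adj_of_adj (hg : 3 < G.egirth) {u v : V} (h : G.Adj u v) : ¬ (ong G).Adj u v := by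
  rintro ⟨-, z, huz, hvz⟩
  have := egirth_le_of_adj_of_walks h (.cons huz.symm .nil) (.cons hvz.symm .nil)
    (by simp [hvz.ne, h.ne']) (by simp [huz.ne, h.ne])
  exact this.not_gt hg

/-- Otherwise the open packing `{p, w}` dominates the larger open packing `{lp, p, lq}`. -/
theorem WellCovered.adj_of_isSupport [Finite V] (hW : WellCovered (ong G)) (hg : 3 < G.egirth)
    {p q : V} (hp : IsSupport G p) (hq : IsSupport G q) (hpq : (ong G).Adj p q) : G.Adj p q := by
  by_contra hnadj
  obtain ⟨lp, hlp⟩ := hp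
  obtain ⟨lq, hlq⟩ := hq
  obtain ⟨hne, w, hpw, hqw⟩ := hpq
  have hlp_p := adj_of_neighborSet_eq_singleton hlp
  have hlq_q := adj_of_neighborSet_eq_singleton hlq
  have hlp_lq : lp ≠ lq := fun h => hne (eq_of_neighborSet_eq_singleton hlq (h ▸ hlp_p))
  have hp_lq : p ≠ lq := fun h => hqw.ne (eq_of_neighborSet_eq_singleton hlq (h ▸ hpw)).symm
  have hS : IsIndep (ong G) {lp, p, lq} := by
    simp only [isIndep_insert, isIndep_singleton, Set.mem_insert_iff, Set.mem_singleton_iff,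
      forall_eq_or_imp, forall_eq, true_and]
    refine ⟨fun h => ?_, fun h => ?_, fun h => ?_⟩
    · exact hnadj (adj_of_mem_closedNeighborSet_ong_leaf hlq ⟨lq, rfl, Or.inr h⟩)
    · exact G.loopless.irrefl p (adj_of_mem_closedNeighborSet_ong_leaf hlp ⟨lp, rfl, Or.inr h.symm⟩)
    · exact hne (eq_of_neighborSet_eq_singleton hlp
        (adj_of_mem_closedNeighborSet_ong_leaf hlq ⟨lq, rfl, Or.inr h⟩)).symm
  have hT : IsIndep (ong G) {p, w} := by
    simp only [isIndep_insert, isIndep_singleton, Set.mem_singleton_iff, forall_eq, true_and]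
    exact not_ong_adj_of_adj hg hpw
  have hcov : closedNeighborSet (ong G) {lp, p, lq} ⊆ closedNeighborSet (ong G) {p, w} := by
    rintro v ⟨x, hx, hvx⟩
    simp only [Set.mem_insert_iff, Set.mem_singleton_iff] at hx
    rcases hx with rfl | rfl | rfl
    · exact mem_closedNeighborSet_ong_of_adj
        (adj_of_mem_closedNeighborSet_ong_leaf hlp ⟨x, rfl, hvx⟩) hpw.symm (by simp)
    · exact ⟨x, by simp, hvx⟩
    · exact mem_closedNeighborSet_ong_of_adj
        (adj_of_mem_closedNeighborSet_ong_leaf hlq ⟨x, rfl, hvx⟩) hqw.symm (by simp)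
  have := hW.ncard_le_of_closedNeighborSet_subset hS hT hcov
  rw [Set.ncard_insert_of_notMem (by simp [hlp_p.ne, hlp_lq]), Set.ncard_pair hp_lq,
    Set.ncard_pair hpw.ne] at this
  omega

lemma exists_grandchild [Finite V] (hW : WellCovered (ong G)) (hc : G.Connected)
    (hg : 15 ≤ G.egirth) {ρ s t : V} (hs : IsSingleStarSupport G s) (hds : G.dist ρ s = 2)
    (hts : (ong G).Adj t s) (htρ : t ∉ closedNeighborSet (ong G) {ρ}) :
    ∃ y f, G.Adj t y ∧ G.Adj y f ∧ G.dist ρ t = 4 ∧ G.dist ρ y = 5 ∧ G.dist ρ f = 6 := by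
  have hlt : ∀ n : ℕ, n < 15 → (n : ℕ∞) < G.egirth := fun n hn =>
    hg.trans_lt' (by exact_mod_cast hn)
  obtain ⟨hts_ne, w, htw, hsw⟩ := hts
  have hdw : G.dist ρ w = 3 := by
    have hne := dist_ne_of_adj hc (r := ρ) (hlt _ (by omega)) hsw
    have hρw : G.dist ρ w ≠ 1 := fun h =>
      htρ (mem_closedNeighborSet_ong_of_adj htw (dist_eq_one_iff_adj.mp h) rfl)
    rcases hsw.diff_dist_adj (u := ρ) with h | h | h <;> omega
  have hdt : G.dist ρ t = 4 := by
    rw [dist_eq_add_one_of_adj_of_ne hc (hlt _ (by omega)) hsw (by omega) htw.symm hts_ne, hdw]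
  obtain ⟨y, hty, hyw⟩ : ∃ y, G.Adj t y ∧ y ≠ w := by
    by_contra! h
    exact hs.2 w hsw ⟨t, Set.eq_singleton_iff_unique_mem.mpr ⟨htw, h⟩⟩
  have hdy : G.dist ρ y = 5 := by
    rw [dist_eq_add_one_of_adj_of_ne hc (hlt _ (by omega)) htw.symm (by omega) hty hyw, hdt]
  -- `y` is not a leaf, for `t` cannot be a support vertex sharing the neighbour `w` with `s`
  obtain ⟨f, hyf, hft⟩ : ∃ f, G.Adj y f ∧ f ≠ t := by
    by_contra! h
    have hadj := hW.adj_of_isSupport (hlt 3 (by norm_num))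
      ⟨y, Set.eq_singleton_iff_unique_mem.mpr ⟨hty.symm, h⟩⟩ hs.1 ⟨hts_ne, w, htw, hsw⟩
    rcases hadj.diff_dist_adj (u := ρ) with h | h | h <;> omega
  refine ⟨y, f, hty, hyf, hdt, hdy, ?_⟩
  rw [dist_eq_add_one_of_adj_of_ne hc (hlt _ (by omega)) hty (by omega) hyf hft, hdy]

/-- Each vertex `t` conflicting with some `s ∈ R` but not with `B` gets a grandchild `f t` at
level `6`. By the girth these form an open packing `F` far from `A ∪ B`, and `B ∪ F` dominates
`A ∪ F`. -/
theorem WellCovered.ncard_le_of_subset_closedNeighborSet_union [Finite V]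
    (hW : WellCovered (ong G)) (hc : G.Connected) (hg : 15 ≤ G.egirth) {ρ : V} {A B R : Set V}
    (hA : IsIndep (ong G) A) (hB : IsIndep (ong G) B) (hρB : ρ ∈ B)
    (hAB : ∀ v ∈ A ∪ B, G.dist ρ v ≤ 3)
    (hR : ∀ s ∈ R, IsSingleStarSupport G s ∧ G.dist ρ s = 2)
    (hcov : closedNeighborSet (ong G) A ⊆
      closedNeighborSet (ong G) B ∪ {v | ∃ s ∈ R, (ong G).Adj v s}) :
    A.ncard ≤ B.ncard := by
  have hlt : ∀ n : ℕ, n < 15 → (n : ℕ∞) < G.egirth := fun n hn =>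
    hg.trans_lt' (by exact_mod_cast hn)
  set targets := {t | (∃ s ∈ R, (ong G).Adj t s) ∧ t ∉ closedNeighborSet (ong G) B}
  have hgc : ∀ t ∈ targets, ∃ y f, G.Adj t y ∧ G.Adj y f ∧
      G.dist ρ t = 4 ∧ G.dist ρ y = 5 ∧ G.dist ρ f = 6 := by
    rintro t ⟨⟨s, hs, hts⟩, htB⟩
    exact exists_grandchild hW hc hg (hR s hs).1 (hR s hs).2 hts
      fun h => htB (closedNeighborSet_mono _ (Set.singleton_subset_iff.mpr hρB) h)
  choose! y f hty hyf hdt hdy hdf using hgc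
  set F := f '' targets
  have hF : IsIndep (ong G) F := by
    rintro _ ⟨t, ht, rfl⟩ _ ⟨t', ht', rfl⟩ hne hadj
    have := hdt t ht; have := hdt t' ht'; have := hdy t ht; have := hdy t' ht'
    have := hdf t ht; have := hdf t' ht'
    obtain ⟨z, hz, hz', hdz⟩ :=
      exists_common_parent hc (r := ρ) (hlt _ (by omega)) hadj (by omega)
    have hzy : z = y t :=
      eq_of_adj_of_adj hc (r := ρ) (hlt _ (by omega)) hz.symm (hyf t ht) hdz (by omega)
    have hzy' : z = y t' :=
      eq_of_adj_of_adj hc (r := ρ) (hlt _ (by omega)) hz'.symm (hyf t' ht') (by omega) (by omega)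
    have htt' : t = t' := eq_of_adj_of_adj hc (r := ρ) (hlt _ (by omega)) (hty t ht)
      (hzy ▸ hzy' ▸ hty t' ht') (by omega) (by omega)
    exact hne (congrArg f htt')
  have hfar : ∀ v ∈ A ∪ B, ∀ x ∈ F, v ≠ x ∧ ¬ (ong G).Adj v x := by
    rintro v hv _ ⟨t, ht, rfl⟩
    have := hAB v hv
    have := hdf t ht
    refine ⟨fun h => by subst h; omega, fun h => ?_⟩
    have := dist_le_dist_add_two_of_ong_adj (r := ρ) h
    omega
  have hAF : IsIndep (ong G) (A ∪ F) :=
    hA.union hF fun a ha x hx => (hfar a (Or.inl ha) x hx).2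
  have hBF : IsIndep (ong G) (B ∪ F) :=
    hB.union hF fun b hb x hx => (hfar b (Or.inr hb) x hx).2
  have hcovF : closedNeighborSet (ong G) (A ∪ F) ⊆ closedNeighborSet (ong G) (B ∪ F) := by
    rintro v ⟨x, hx | hx, hvx⟩
    · rcases hcov ⟨x, hx, hvx⟩ with hvB | ⟨s, hs, hvs⟩
      · exact closedNeighborSet_mono _ Set.subset_union_left hvB
      by_cases hvB : v ∈ closedNeighborSet (ong G) B
      · exact closedNeighborSet_mono _ Set.subset_union_left hvB
      have hv : v ∈ targets := ⟨⟨s, hs, hvs⟩, hvB⟩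
      refine ⟨f v, Or.inr ⟨v, hv, rfl⟩, Or.inr ⟨fun h => ?_, y v, hty v hv, (hyf v hv).symm⟩⟩
      have := hdf v hv
      rw [← h, hdt v hv] at this
      omega
    · exact ⟨x, Or.inr hx, hvx⟩
  have hdisj : Disjoint A F :=
    Set.disjoint_left.mpr fun a ha hx => (hfar a (Or.inl ha) a hx).1 rfl
  have := hW.ncard_le_of_closedNeighborSet_subset hAF hBF hcovF
  rw [Set.ncard_union_eq hdisj] at this
  have := Set.ncard_union_le B F
  omega

lemma ncard_triple_le (a b c : V) : ({a, b, c} : Set V).ncard ≤ 3 := by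
  have := Set.ncard_insert_le a {b, c}
  have := Set.ncard_insert_le b {c}
  rw [Set.ncard_singleton] at this
  omega

section Leaves

variable {l₁ s₁ l₂ s₂ : V} (hl₁ : G.neighborSet l₁ = {s₁}) (hl₂ : G.neighborSet l₂ = {s₂})
  (hd : 3 ≤ G.dist s₁ s₂)
include hl₁ hl₂ hd

lemma isIndep_ong_leaves_supports : IsIndep (ong G) {l₁, s₁, l₂, s₂} := by
  have h₁₂ : ¬ G.Adj s₁ s₂ := fun h => by rw [dist_eq_one_iff_adj.mpr h] at hd; omega
  have hleaf₁ {v : V} (h : (ong G).Adj v l₁) : G.Adj v s₁ :=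
    adj_of_mem_closedNeighborSet_ong_leaf hl₁ ⟨l₁, rfl, Or.inr h⟩
  have hleaf₂ {v : V} (h : (ong G).Adj v l₂) : G.Adj v s₂ :=
    adj_of_mem_closedNeighborSet_ong_leaf hl₂ ⟨l₂, rfl, Or.inr h⟩
  simp only [isIndep_insert, isIndep_singleton, Set.mem_insert_iff, Set.mem_singleton_iff,
    forall_eq_or_imp, forall_eq, true_and]
  refine ⟨⟨fun h => G.loopless.irrefl _ (hleaf₂ h.symm), fun h => h₁₂ (hleaf₂ h), fun h => ?_⟩,
    fun h => G.loopless.irrefl _ (hleaf₁ h.symm), fun h => ?_, fun h => h₁₂ (hleaf₁ h.symm).symm⟩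
  · have := dist_le_dist_add_two_of_ong_adj (r := s₁) h
    rw [dist_self] at this
    omega
  · rw [← eq_of_neighborSet_eq_singleton hl₁ (hleaf₂ h), dist_self] at hd
    omega

lemma ncard_leaves_supports : ({l₁, s₁, l₂, s₂} : Set V).ncard = 4 := by
  have h₁₂ : ¬ G.Adj s₁ s₂ := fun h => by rw [dist_eq_one_iff_adj.mpr h] at hd; omega
  have hs : s₁ ≠ s₂ := fun h => by rw [h, dist_self] at hd; omega
  have hl₁s₁ := adj_of_neighborSet_eq_singleton hl₁
  have hl₂s₂ := adj_of_neighborSet_eq_singleton hl₂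
  have hl : l₁ ≠ l₂ := fun h => hs (eq_of_neighborSet_eq_singleton hl₂ (h ▸ hl₁s₁))
  rw [Set.ncard_insert_of_notMem, Set.ncard_insert_of_notMem, Set.ncard_pair hl₂s₂.ne]
  · simp only [Set.mem_insert_iff, Set.mem_singleton_iff, not_or]
    exact ⟨fun h => h₁₂ (h ▸ hl₂s₂), hs⟩
  · simp only [Set.mem_insert_iff, Set.mem_singleton_iff, not_or]
    exact ⟨hl₁s₁.ne, hl, fun h => h₁₂ (h ▸ hl₁s₁).symm⟩

theorem WellCovered.false_of_dominating_triple [Finite V] (hW : WellCovered (ong G))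
    (hc : G.Connected) (hg : 15 ≤ G.egirth) {ρ x : V} {R : Set V}
    (hB : IsIndep (ong G) {ρ, x, l₂}) (hlev : ∀ v ∈ ({l₁, s₁, l₂, s₂, x} : Set V), G.dist ρ v ≤ 3)
    (hR : ∀ s ∈ R, IsSingleStarSupport G s ∧ G.dist ρ s = 2)
    (hs₁B : ∃ u ∈ ({ρ, x} : Set V), G.Adj u s₁)
    (hcov₁ : closedNeighborSet (ong G) {s₁} ⊆
      closedNeighborSet (ong G) {ρ, x, l₂} ∪ {v | ∃ s ∈ R, (ong G).Adj v s})
    (hcov₂ : closedNeighborSet (ong G) {s₂} ⊆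
      closedNeighborSet (ong G) {ρ, x, l₂} ∪ {v | ∃ s ∈ R, (ong G).Adj v s}) : False := by
  have hAB : ∀ v ∈ ({l₁, s₁, l₂, s₂} ∪ {ρ, x, l₂} : Set V), G.dist ρ v ≤ 3 := by
    simp only [Set.mem_insert_iff, Set.mem_singleton_iff, forall_eq_or_imp, forall_eq] at hlev
    simp only [Set.mem_union, Set.mem_insert_iff, Set.mem_singleton_iff]
    rintro v ((rfl | rfl | rfl | rfl) | rfl | rfl | rfl) <;> simp [hlev]
  have hcov : closedNeighborSet (ong G) {l₁, s₁, l₂, s₂} ⊆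
      closedNeighborSet (ong G) {ρ, x, l₂} ∪ {v | ∃ s ∈ R, (ong G).Adj v s} := by
    rintro v ⟨y, hy, hvy⟩
    simp only [Set.mem_insert_iff, Set.mem_singleton_iff] at hy
    rcases hy with rfl | rfl | rfl | rfl
    · obtain ⟨u, hu, hus₁⟩ := hs₁B
      refine Or.inl (mem_closedNeighborSet_ong_of_adj
        (adj_of_mem_closedNeighborSet_ong_leaf hl₁ ⟨_, rfl, hvy⟩) hus₁ ?_)
      rcases hu with rfl | rfl <;> simp
    · exact hcov₁ ⟨y, rfl, hvy⟩
    · exact Or.inl ⟨y, by simp, hvy⟩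
    · exact hcov₂ ⟨y, rfl, hvy⟩
  have := hW.ncard_le_of_subset_closedNeighborSet_union hc hg
    (isIndep_ong_leaves_supports hl₁ hl₂ hd) hB (by simp) hAB hR hcov
  rw [ncard_leaves_supports hl₁ hl₂ hd] at this
  have := ncard_triple_le ρ x l₂
  omega

end Leaves

lemma SimpleGraph.Walk.exists_adj_adj_adj_of_length_eq_three {u v : V} (p : G.Walk u v)
    (hp : p.length = 3) : ∃ a b, G.Adj u a ∧ G.Adj a b ∧ G.Adj b v := by
  rcases p with _ | ⟨h₁, _ | ⟨h₂, _ | ⟨h₃, _ | _⟩⟩⟩ <;> simp at hp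
  exact ⟨_, _, h₁, h₂, h₃⟩

lemma SimpleGraph.Walk.exists_adj_adj_adj_adj_of_length_eq_four {u v : V} (p : G.Walk u v)
    (hp : p.length = 4) : ∃ a b c, G.Adj u a ∧ G.Adj a b ∧ G.Adj b c ∧ G.Adj c v := by
  rcases p with _ | ⟨h₁, _ | ⟨h₂, _ | ⟨h₃, _ | ⟨h₄, _ | _⟩⟩⟩⟩ <;> simp at hp
  exact ⟨_, _, _, h₁, h₂, h₃, h₄⟩

/-- Root the levels at the neighbour `a` of `s₁` on a shortest `s₁`-`s₂` path `s₁ a b s₂` and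
trade `{l₁, s₁, l₂, s₂}` for `{a, s₁, l₂}`. -/
lemma WellCovered.dist_ne_three [Finite V] (hW : WellCovered (ong G)) (hc : G.Connected)
    (hg : 15 ≤ G.egirth) {s₁ s₂ : V} (hs₁ : IsSupport G s₁) (hs₂ : IsSingleStarSupport G s₂) :
    G.dist s₁ s₂ ≠ 3 := by
  intro hd
  obtain ⟨l₁, hl₁⟩ := hs₁
  obtain ⟨l₂, hl₂⟩ := hs₂.1
  obtain ⟨p, hp⟩ := hc.exists_walk_length_eq_dist s₁ s₂
  obtain ⟨a, b, h₁, h₂, h₃⟩ := p.exists_adj_adj_adj_of_length_eq_three (hp.trans hd)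
  have hleaf₂ {v : V} (h : (ong G).Adj v l₂) : G.Adj v s₂ :=
    adj_of_mem_closedNeighborSet_ong_leaf hl₂ ⟨l₂, rfl, Or.inr h⟩
  have has₁ : G.dist a s₁ = 1 := dist_eq_one_iff_adj.mpr h₁.symm
  have has₂ : G.dist a s₂ = 2 := by
    have hs₁s₂ := hc.dist_triangle (u := s₁) (v := a) (w := s₂)
    have has₂ := dist_le_dist_add_one_of_adj (r := a) h₃
    rw [dist_eq_one_iff_adj.mpr h₁] at hs₁s₂
    rw [dist_eq_one_iff_adj.mpr h₂] at has₂
    omega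
  have hB : IsIndep (ong G) {a, s₁, l₂} := by
    simp only [isIndep_insert, isIndep_singleton, Set.mem_insert_iff, Set.mem_singleton_iff,
      forall_eq_or_imp, forall_eq, true_and]
    refine ⟨fun h => ?_, not_ong_adj_of_adj (hg.trans_lt' (by norm_num)) h₁.symm, fun h => ?_⟩
    · rw [dist_eq_one_iff_adj.mpr (hleaf₂ h)] at hd
      omega
    · rw [dist_eq_one_iff_adj.mpr (hleaf₂ h)] at has₂
      omega
  refine hW.false_of_dominating_triple hl₁ hl₂ hd.ge hc hg hB ?_
    (fun s hs => (Set.mem_singleton_iff.mp hs) ▸ ⟨hs₂, has₂⟩) ⟨a, by simp, h₁.symm⟩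
    ((closedNeighborSet_mono _ (by simp)).trans Set.subset_union_left) ?_
  · have := dist_le_dist_add_one_of_adj (r := a) (adj_of_neighborSet_eq_singleton hl₁).symm
    have := dist_le_dist_add_one_of_adj (r := a) (adj_of_neighborSet_eq_singleton hl₂).symm
    simp only [Set.mem_insert_iff, Set.mem_singleton_iff]
    rintro v (rfl | rfl | rfl | rfl | rfl) <;> omega
  · rintro v ⟨x, hx, hvx⟩
    rw [Set.mem_singleton_iff.mp hx] at hvx
    rcases hvx with rfl | h
    · exact Or.inl (mem_closedNeighborSet_ong_of_adj h₃.symm h₂ (by simp))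
    · exact Or.inr ⟨s₂, rfl, h⟩

/-- Root the levels at the middle vertex `b` of a shortest `s₁`-`s₂` path `s₁ a b c s₂` and
trade `{l₁, s₁, l₂, s₂}` for `{b, a, l₂}`. -/
lemma WellCovered.dist_ne_four [Finite V] (hW : WellCovered (ong G)) (hc : G.Connected)
    (hg : 15 ≤ G.egirth) {s₁ s₂ : V} (hs₁ : IsSingleStarSupport G s₁)
    (hs₂ : IsSingleStarSupport G s₂) : G.dist s₁ s₂ ≠ 4 := by
  intro hd
  obtain ⟨l₁, hl₁⟩ := hs₁.1
  obtain ⟨l₂, hl₂⟩ := hs₂.1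
  obtain ⟨p, hp⟩ := hc.exists_walk_length_eq_dist s₁ s₂
  obtain ⟨a, b, c, h₁, h₂, h₃, h₄⟩ := p.exists_adj_adj_adj_adj_of_length_eq_four (hp.trans hd)
  have hleaf₂ {v : V} (h : (ong G).Adj v l₂) : G.Adj v s₂ :=
    adj_of_mem_closedNeighborSet_ong_leaf hl₂ ⟨l₂, rfl, Or.inr h⟩
  have hba : G.dist b a = 1 := dist_eq_one_iff_adj.mpr h₂.symm
  have hbs₁ := dist_le_dist_add_one_of_adj (r := b) h₁.symm
  have hbs₂ := dist_le_dist_add_one_of_adj (r := b) h₄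
  have hbc : G.dist b c = 1 := dist_eq_one_iff_adj.mpr h₃
  have hs₁s₂ := hc.dist_triangle (u := s₁) (v := b) (w := s₂)
  rw [dist_comm (u := s₁) (v := b)] at hs₁s₂
  have hbs₁' : G.dist b s₁ = 2 := by omega
  have hbs₂' : G.dist b s₂ = 2 := by omega
  have hB : IsIndep (ong G) {b, a, l₂} := by
    simp only [isIndep_insert, isIndep_singleton, Set.mem_insert_iff, Set.mem_singleton_iff,
      forall_eq_or_imp, forall_eq, true_and]
    refine ⟨fun h => ?_, not_ong_adj_of_adj (hg.trans_lt' (by norm_num)) h₂.symm, fun h => ?_⟩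
    · have := dist_le_dist_add_one_of_adj (r := s₁) (hleaf₂ h)
      rw [dist_eq_one_iff_adj.mpr h₁] at this
      omega
    · rw [dist_eq_one_iff_adj.mpr (hleaf₂ h)] at hbs₂'
      omega
  have hR : ∀ s ∈ ({s₁, s₂} : Set V), IsSingleStarSupport G s ∧ G.dist b s = 2 := by
    simp only [Set.mem_insert_iff, Set.mem_singleton_iff]
    rintro s (rfl | rfl)
    exacts [⟨hs₁, hbs₁'⟩, ⟨hs₂, hbs₂'⟩]
  refine hW.false_of_dominating_triple hl₁ hl₂ (by omega) hc hg hB ?_ hR ⟨a, by simp, h₁.symm⟩ ?_ ?_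
  · have := dist_le_dist_add_one_of_adj (r := b) (adj_of_neighborSet_eq_singleton hl₁).symm
    have := dist_le_dist_add_one_of_adj (r := b) (adj_of_neighborSet_eq_singleton hl₂).symm
    simp only [Set.mem_insert_iff, Set.mem_singleton_iff]
    rintro v (rfl | rfl | rfl | rfl | rfl) <;> omega
  · rintro v ⟨x, hx, hvx⟩
    rw [Set.mem_singleton_iff.mp hx] at hvx
    rcases hvx with rfl | h
    · exact Or.inl (mem_closedNeighborSet_ong_of_adj h₁ h₂.symm (by simp))
    · exact Or.inr ⟨s₁, by simp, h⟩
  · rintro v ⟨x, hx, hvx⟩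
    rw [Set.mem_singleton_iff.mp hx] at hvx
    rcases hvx with rfl | h
    · exact Or.inl (mem_closedNeighborSet_ong_of_adj h₄.symm h₃ (by simp))
    · exact Or.inr ⟨s₂, by simp, h⟩

end

theorem stmt16_general {V : Type*} [Fintype V] (G : SimpleGraph V)
    (hc : G.Connected)
    (hg : 15 ≤ G.egirth) (hU : InU G) :
    ∀ s₁ s₂, IsSingleStarSupport G s₁ → IsSingleStarSupport G s₂ →
      G.dist s₁ s₂ ≠ 3 ∧ G.dist s₁ s₂ ≠ 4 := by
  intro s₁ s₂ hs₁ hs₂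
  have hW := hU.wellCovered_ong
  exact ⟨hW.dist_ne_three hc hg hs₁.1 hs₂, hW.dist_ne_four hc hg hs₁ hs₂⟩

theorem stmt16 {V : Type*} [Fintype V] [Nonempty V] (G : SimpleGraph V)
    [DecidableRel G.Adj] (hc : G.Connected) (hδ : G.minDegree = 1)
    (hg : 15 ≤ G.egirth) (hU : InU G) :
    ∀ s₁ s₂, IsSingleStarSupport G s₁ → IsSingleStarSupport G s₂ →
      G.dist s₁ s₂ ≠ 3 ∧ G.dist s₁ s₂ ≠ 4 :=
  stmt16_general G hc hg hU
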